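/- arXiv:1407.6047 — 4 statements merged into one kernel-verified Lean document; each statement's English description precedes it below -/
import Mathlib

section
/- Let m, M, v, ε be real numbers with m < 0, v > 0, 0 < ε < v, and (1+ε)(-m) < M < (1+2ε)(-m). Then |M+m| < (M-m)·v. (Thus if a negative-mass particle of relativistic mass m and a positive-mass particle of relativistic mass M ≈ |m| collide head-on, each moving with the same speed v in opposite directions, so that their total linear momentum has magnitude (M+|m|)v = (M-m)v, the fused particle, with relativistic mass M+m and momentum of magnitude (M-m)v, is faster than light.) -/
/-- Third thought experiment: a head-on collision, with common speed `v`, of a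
negative-mass particle of mass `m` and a positive-mass particle of mass
`M ≈ |m|` produces a faster-than-light particle: `|M+m| < (M-m)·v`. -/
theorem stmt_5 (m M v ε : ℝ) (hm : m < 0) (hv : v > 0) (hε0 : 0 < ε)
    (hεv : ε < v) (hM1 : (1 + ε) * (-m) < M) (hM2 : M < (1 + 2 * ε) * (-m)) :
    |M + m| < (M - m) * v := by
  have h1 : 0 < M + m := by nlinarith
  rw [abs_of_pos h1]
  nlinarith [mul_pos hε0 hv, mul_lt_mul_of_pos_left hεv hε0]
end

section
/- Let m be a real number with m < 0 and let u ∈ ℝ³ with u ≠ 0. Set the second particle's mass to M = -2m and its velocity to w = -u/‖u‖ (a unit vector opposite to u). Then the conservation equations m_c = m + M and m_c · v_c = m·u + M·w have the unique solution m_c = -m > 0 and v_c = -(1 + 2/‖u‖)·u, and ‖v_c‖ = ‖u‖ + 2 > 1. (This is the computation underlying Proposition 1 in the case where the negative-mass particle is moving: colliding it with a light-speed particle of mass -2m moving in the opposite direction yields a faster-than-light particle.) -/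
/-- Computation underlying Proposition 1, moving case: colliding a moving
negative-mass particle `(m, u)` with a light-speed particle of mass `M = -2m`
and velocity `w = -u/‖u‖`, the conservation equations have the unique solution
`m_c = -m > 0`, `v_c = -(1 + 2/‖u‖)·u`, and `‖v_c‖ = ‖u‖ + 2 > 1`. -/
theorem stmt_7 (m : ℝ) (hm : m < 0) (u : EuclideanSpace ℝ (Fin 3))
    (hu : u ≠ 0) (M : ℝ) (hM : M = -2 * m) (w : EuclideanSpace ℝ (Fin 3))
    (hw : w = -(‖u‖⁻¹ • u)) :
    (∀ (mc : ℝ) (vc : EuclideanSpace ℝ (Fin 3)),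
        (mc = m + M ∧ mc • vc = m • u + M • w) ↔
        (mc = -m ∧ vc = -((1 + 2 / ‖u‖) • u))) ∧
    -m > 0 ∧ ‖-((1 + 2 / ‖u‖) • u)‖ = ‖u‖ + 2 ∧ ‖u‖ + 2 > 1 := by
  have hun : ‖u‖ ≠ 0 := norm_ne_zero_iff.mpr hu
  have hup : (0:ℝ) < ‖u‖ := norm_pos_iff.mpr hu
  have hmom : m • u + M • w = (-m) • (-((1 + 2 / ‖u‖) • u)) := by
    rw [hM, hw]
    have h2u : (2:ℝ) / ‖u‖ = 2 * ‖u‖⁻¹ := by ring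
    rw [h2u]
    module
  refine ⟨fun mc vc => ⟨fun ⟨h1, h2⟩ => ?_, fun ⟨h1, h2⟩ => ?_⟩, by linarith,
    ?_, by linarith⟩
  · have hmc : mc = -m := by rw [h1, hM]; ring
    refine ⟨hmc, ?_⟩
    rw [hmc, hmom] at h2
    exact smul_right_injective _ (by linarith) h2
  · constructor
    · rw [h1, hM]; ring
    · rw [h1, h2, hmom]
  · rw [norm_neg, norm_smul, Real.norm_eq_abs,
      abs_of_pos (by positivity : (0:ℝ) < 1 + 2 / ‖u‖)]
    field_simp
end

section
/- Let m be a real number with m < 0 and let u ∈ ℝ³ with u ≠ 0. Set M = -m·(1 + ‖u‖/2). Then M > 0, the fused mass m_c = m + M equals -m·‖u‖/2 > 0, and the unique v_c satisfying m_c · v_c = m·u + M·0 is v_c = -2u/‖u‖, so ‖v_c‖ = 2 > 1. (This is the computation underlying Proposition 2: colliding a moving negative-mass particle with a suitably chosen stationary positive-mass particle yields a particle of speed exactly 2.) -/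
/-!
Momentum conservation with a stationary partner reads `(m + M) • v = m • u`. The choice of `M`
makes the fused mass `m + M = -m‖u‖/2` positive, so `v = (m + M)⁻¹ • m • u = -(2/‖u‖) • u`,
a vector of norm `2` pointing against `u`.
-/

variable {E : Type*} [NormedAddCommGroup E] [NormedSpace ℝ E]

theorem norm_div_norm_smul {u : E} (hu : u ≠ 0) {r : ℝ} (hr : 0 ≤ r) :
    ‖(r / ‖u‖) • u‖ = r := by
  have hnu : 0 < ‖u‖ := norm_pos_iff.mpr hu
  rw [norm_smul, Real.norm_of_nonneg (div_nonneg hr hnu.le), div_mul_cancel₀ r hnu.ne']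

theorem smul_eq_iff_eq_neg_div_norm_smul {m : ℝ} (hm : m ≠ 0) {u : E} (hu : u ≠ 0) (v : E) :
    (-m * ‖u‖ / 2) • v = m • u ↔ v = -((2 / ‖u‖) • u) := by
  have hnu : ‖u‖ ≠ 0 := norm_ne_zero_iff.mpr hu
  have hmass : -m * ‖u‖ / 2 ≠ 0 := by
    simpa [neg_mul, neg_div] using div_ne_zero (mul_ne_zero hm hnu) two_ne_zero
  rw [← eq_inv_smul_iff₀ hmass, smul_smul, ← neg_smul]
  constructor <;> rintro rfl <;> congr 1 <;> field_simp

/-- Computation underlying Proposition 2: colliding a moving negative-mass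
particle `(m, u)` with a stationary particle of mass `M = -m·(1 + ‖u‖/2)`
yields a fused mass `m + M = -m·‖u‖/2 > 0` and the unique `v_c` with
`(m+M)·v_c = m·u` is `v_c = -2u/‖u‖`, of norm `2 > 1`. -/
theorem stmt_9 (m : ℝ) (hm : m < 0) (u : EuclideanSpace ℝ (Fin 3))
    (hu : u ≠ 0) (M : ℝ) (hM : M = -m * (1 + ‖u‖ / 2)) :
    M > 0 ∧
    m + M = -m * ‖u‖ / 2 ∧
    -m * ‖u‖ / 2 > 0 ∧
    (∀ vc : EuclideanSpace ℝ (Fin 3),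
        (m + M) • vc = m • u + M • (0 : EuclideanSpace ℝ (Fin 3)) ↔
        vc = -((2 / ‖u‖) • u)) ∧
    ‖-((2 / ‖u‖) • u)‖ = 2 ∧ (2 : ℝ) > 1 := by
  have hnu : 0 < ‖u‖ := norm_pos_iff.mpr hu
  have hneg : 0 < -m := neg_pos.mpr hm
  have hsum : m + M = -m * ‖u‖ / 2 := by rw [hM]; ring
  refine ⟨?_, hsum, by positivity, fun vc => ?_, ?_, one_lt_two⟩
  · rw [hM]; positivity
  · rw [smul_zero, add_zero, hsum]
    exact smul_eq_iff_eq_neg_div_norm_smul hm.ne hu vc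
  · rw [norm_neg, norm_div_norm_smul hu zero_le_two]
end

section
/- Let m ∈ ℝ with m < 0, let u ∈ ℝ³ with u ≠ 0, let ε ∈ ℝ with 0 < ε < ‖u‖, and let M ∈ ℝ with (1+ε)(-m) < M < (1+2ε)(-m). Consider a second particle of mass M and velocity -u. Then M + m > 0 (in particular M + m ≠ 0), and the unique v_c satisfying (M+m)·v_c = m·u + M·(-u) satisfies ‖v_c‖ > ‖u‖/ε > 1. (This is the computation underlying Proposition 3: a head-on collision of a moving negative-mass particle with an oppositely-moving positive-mass particle of nearly opposite mass yields a faster-than-light particle.) -/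
/-- Computation underlying Proposition 3: a head-on collision of a moving
negative-mass particle `(m, u)` with an oppositely-moving positive-mass
particle `(M, -u)` of nearly opposite mass yields a faster-than-light
particle: the unique `v_c` with `(M+m)·v_c = m·u + M·(-u)` has
`‖v_c‖ > ‖u‖/ε > 1`. -/
theorem stmt_10 (m : ℝ) (hm : m < 0) (u : EuclideanSpace ℝ (Fin 3))
    (hu : u ≠ 0) (ε : ℝ) (hε0 : 0 < ε) (hεu : ε < ‖u‖) (M : ℝ)
    (hM1 : (1 + ε) * (-m) < M) (hM2 : M < (1 + 2 * ε) * (-m)) :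
    M + m > 0 ∧
    (∃! vc : EuclideanSpace ℝ (Fin 3), (M + m) • vc = m • u + M • (-u)) ∧
    (∀ vc : EuclideanSpace ℝ (Fin 3),
        (M + m) • vc = m • u + M • (-u) →
        ‖vc‖ > ‖u‖ / ε ∧ ‖u‖ / ε > 1) := by
  have hMm : 0 < M + m := by nlinarith
  have hne : M + m ≠ 0 := ne_of_gt hMm
  have hu0 : 0 < ‖u‖ := norm_pos_iff.mpr hu
  have hrhs : m • u + M • (-u) = (m - M) • u := by
    rw [smul_neg, sub_smul]; abel
  refine ⟨hMm, ⟨((m - M) / (M + m)) • u, ?_, ?_⟩, ?_⟩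
  · show (M + m) • ((m - M) / (M + m)) • u = m • u + M • (-u)
    rw [hrhs, smul_smul, mul_div_cancel₀ _ hne]
  · intro y hy
    rw [hrhs] at hy
    have := congrArg (fun z => ((M + m)⁻¹ : ℝ) • z) hy
    simpa [smul_smul, inv_mul_cancel₀ hne, div_eq_inv_mul] using this
  · intro vc hvc
    rw [hrhs] at hvc
    have hn := congrArg norm hvc
    rw [norm_smul, norm_smul, Real.norm_eq_abs, Real.norm_eq_abs,
      abs_of_pos hMm, abs_of_neg (by nlinarith : m - M < 0)] at hn
    constructor
    · rw [gt_iff_lt, div_lt_iff₀ hε0]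
      have : ε * (M - m) > M + m := by nlinarith
      nlinarith [hn]
    · rw [gt_iff_lt, lt_div_iff₀ hε0]; linarith
end
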